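/- For every positive integer n, the number of Δ-free families of subsets of [n] having exactly 2^(n-1) members is exactly 2^n − 1. -/
import Mathlib
open Finset

theorem card_symmDiff_add {α : Type*} [DecidableEq α] (s t : Finset α) :
    (symmDiff s t).card + 2 * (s ∩ t).card = s.card + t.card := by
  rw [symmDiff_def, sup_eq_union,
    Finset.card_union_of_disjoint (disjoint_sdiff_sdiff)]
  have h1 := Finset.card_sdiff_add_card_inter s t
  have h2 := Finset.card_sdiff_add_card_inter t s
  rw [Finset.inter_comm] at h2
  omega

theorem odd_card_symmDiff {α : Type*} [DecidableEq α] (s t : Finset α) :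
    Odd (symmDiff s t).card ↔ (Odd s.card ↔ ¬ Odd t.card) := by
  have := card_symmDiff_add s t
  simp only [Nat.odd_iff] at *
  omega

def fam (n : ℕ) (S : Finset (Fin n)) : Finset (Finset (Fin n)) :=
  univ.filter (fun A => Odd (A ∩ S).card)

theorem mem_fam {n : ℕ} {S A : Finset (Fin n)} : A ∈ fam n S ↔ Odd (A ∩ S).card := by
  simp [fam]

theorem inter_symmDiff {n : ℕ} (A B S : Finset (Fin n)) :
    symmDiff A B ∩ S = symmDiff (A ∩ S) (B ∩ S) := by
  have := inf_symmDiff_distrib_right A B S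
  simpa using this

theorem fam_free {n : ℕ} (S : Finset (Fin n)) :
    ∀ A ∈ fam n S, ∀ B ∈ fam n S, symmDiff A B ∉ fam n S := by
  intro A hA B hB hAB
  rw [mem_fam] at hA hB hAB
  rw [inter_symmDiff, odd_card_symmDiff] at hAB
  tauto

theorem singleton_mem_fam {n : ℕ} {S : Finset (Fin n)} {i : Fin n} :
    {i} ∈ fam n S ↔ i ∈ S := by
  rw [mem_fam]
  by_cases h : i ∈ S
  · simp [Finset.singleton_inter_of_mem h, h]
  · simp [Finset.singleton_inter_of_notMem h, h]

theorem fam_card {n : ℕ} {S : Finset (Fin n)} (hS : S.Nonempty) :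
    (fam n S).card = 2 ^ (n - 1) := by
  obtain ⟨i, hi⟩ := hS
  have hflip : ∀ A : Finset (Fin n),
      (Odd ((symmDiff {i} A) ∩ S).card ↔ ¬ Odd (A ∩ S).card) := by
    intro A
    rw [inter_symmDiff, odd_card_symmDiff, Finset.singleton_inter_of_mem hi]
    simp
  have himg : (fam n S).image (fun A => symmDiff {i} A) = (fam n S)ᶜ := by
    ext B
    simp only [mem_image, Finset.mem_compl, mem_fam]
    constructor
    · rintro ⟨A, hA, rfl⟩
      rw [hflip A]
      exact fun h => h hA
    · intro hB
      refine ⟨symmDiff {i} B, ?_, by simp [symmDiff_symmDiff_cancel_left]⟩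
      exact (hflip B).mpr hB
  have hinj : Function.Injective (fun A : Finset (Fin n) => symmDiff {i} A) := by
    intro a b h
    simpa [symmDiff_symmDiff_cancel_left] using
      congrArg (fun x => symmDiff ({i} : Finset (Fin n)) x) h
  have hcard : (fam n S).card = ((fam n S)ᶜ).card := by
    rw [← himg, Finset.card_image_of_injective _ hinj]
  have htot := Finset.card_add_card_compl (fam n S)
  rw [← hcard] at htot
  have huniv : Fintype.card (Finset (Fin n)) = 2 ^ n := by simp
  rw [huniv] at htot
  have hn : 0 < n := Fin.pos i
  have : 2 ^ n = 2 * 2 ^ (n - 1) := by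
    rw [← pow_succ']
    congr 1
    omega
  omega

theorem fam_inj {n : ℕ} : Function.Injective (fam n) := by
  intro S T h
  ext i
  rw [← singleton_mem_fam (S := S), ← singleton_mem_fam (S := T), h]

theorem free_eq_fam {n : ℕ} (hn : 0 < n) (𝒜 : Finset (Finset (Fin n)))
    (hfree : ∀ A ∈ 𝒜, ∀ B ∈ 𝒜, symmDiff A B ∉ 𝒜) (hcard : 𝒜.card = 2 ^ (n - 1)) :
    ∃ S : Finset (Fin n), S.Nonempty ∧ 𝒜 = fam n S := by
  have hAne : 𝒜.Nonempty := Finset.card_pos.mp (by rw [hcard]; positivity)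
  obtain ⟨a, ha⟩ := hAne
  have hempty : (∅ : Finset (Fin n)) ∉ 𝒜 := by
    have := hfree a ha a ha
    simpa [symmDiff_self] using this
  have hpow : 2 ^ n = 2 * 2 ^ (n - 1) := by
    rw [← pow_succ']
    congr 1
    omega
  have himg : 𝒜.image (fun x => symmDiff a x) = 𝒜ᶜ := by
    have hinj : Function.Injective (fun x : Finset (Fin n) => symmDiff a x) := by
      intro x y h
      simpa [symmDiff_symmDiff_cancel_left] using
        congrArg (fun z => symmDiff a z) h
    apply Finset.eq_of_subset_of_card_le
    · intro B hB
      rw [Finset.mem_image] at hB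
      obtain ⟨b, hb, rfl⟩ := hB
      exact Finset.mem_compl.mpr (hfree a ha b hb)
    · rw [Finset.card_image_of_injective _ hinj, Finset.card_compl,
        Fintype.card_finset, Fintype.card_fin, hcard]
      omega
  have hmem2 : ∀ A ∉ 𝒜, ∀ B ∉ 𝒜, symmDiff A B ∉ 𝒜 := by
    intro A hA B hB
    have hA' : A ∈ 𝒜.image (fun x => symmDiff a x) := by
      rw [himg]; exact Finset.mem_compl.mpr hA
    have hB' : B ∈ 𝒜.image (fun x => symmDiff a x) := by
      rw [himg]; exact Finset.mem_compl.mpr hB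
    rw [Finset.mem_image] at hA' hB'
    obtain ⟨b1, hb1, rfl⟩ := hA'
    obtain ⟨b2, hb2, rfl⟩ := hB'
    have heq : symmDiff (symmDiff a b1) (symmDiff a b2) = symmDiff b1 b2 := by
      ext x
      simp only [Finset.mem_symmDiff]
      tauto
    rw [heq]
    exact hfree b1 hb1 b2 hb2
  have hmem3 : ∀ A ∈ 𝒜, ∀ B ∉ 𝒜, symmDiff A B ∈ 𝒜 := by
    intro A hA B hB
    by_contra h
    have h2 := hmem2 B hB (symmDiff A B) h
    have heq : symmDiff B (symmDiff A B) = A := by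
      ext x
      simp only [Finset.mem_symmDiff]
      tauto
    rw [heq] at h2
    exact h2 hA
  have hxor : ∀ A B : Finset (Fin n), symmDiff A B ∈ 𝒜 ↔ ((A ∈ 𝒜) ↔ (B ∉ 𝒜)) := by
    intro A B
    by_cases hA : A ∈ 𝒜 <;> by_cases hB : B ∈ 𝒜
    · simp only [hA, hB]
      simp [hfree A hA B hB]
    · simp only [hA, hB]
      simp [hmem3 A hA B hB]
    · have := hmem3 B hB A hA
      rw [symmDiff_comm] at this
      simp only [hA, hB]
      simp [this]
    · simp only [hA, hB]
      simp [hmem2 A hA B hB]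
  set S : Finset (Fin n) := univ.filter (fun i : Fin n => ({i} : Finset (Fin n)) ∈ 𝒜)
    with hSdef
  have hSmem : ∀ i : Fin n, i ∈ S ↔ ({i} : Finset (Fin n)) ∈ 𝒜 := by
    intro i
    simp [hSdef]
  have hchar : ∀ A : Finset (Fin n), A ∈ 𝒜 ↔ Odd ((A ∩ S).card) := by
    intro A
    induction A using Finset.induction_on with
    | empty => simp [hempty]
    | @insert i A' hi ih =>
      have hins : insert i A' = symmDiff {i} A' := by
        ext x
        simp only [Finset.mem_symmDiff, Finset.mem_insert, Finset.mem_singleton]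
        constructor
        · rintro (rfl | hx)
          · exact Or.inl ⟨rfl, hi⟩
          · refine Or.inr ⟨hx, fun h => hi (h ▸ hx)⟩
        · rintro (⟨rfl, _⟩ | ⟨hx, _⟩)
          · exact Or.inl rfl
          · exact Or.inr hx
      rw [hins, hxor, inter_symmDiff, odd_card_symmDiff]
      have h1 : Odd (({i} : Finset (Fin n)) ∩ S).card ↔ ({i} : Finset (Fin n)) ∈ 𝒜 := by
        by_cases h : i ∈ S
        · simp [Finset.singleton_inter_of_mem h, (hSmem i).mp h]
        · simp only [Finset.singleton_inter_of_notMem h]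
          simp only [Finset.card_empty]
          simp only [Nat.odd_iff]
          constructor
          · omega
          · intro hc
            exact absurd ((hSmem i).mpr hc) h
      rw [h1, ← ih]
  refine ⟨S, ?_, ?_⟩
  · rcases Finset.eq_empty_or_nonempty S with h | h
    · exfalso
      have := (hchar a).mp ha
      rw [h] at this
      simp at this
    · exact h
  · ext A
    rw [mem_fam]
    exact hchar A

theorem stmt_16 (n : ℕ) (hn : 0 < n) :
    (Finset.univ.filter (fun 𝒜 : Finset (Finset (Fin n)) =>
      (∀ A ∈ 𝒜, ∀ B ∈ 𝒜, symmDiff A B ∉ 𝒜) ∧ 𝒜.card = 2 ^ (n - 1))).card =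
    2 ^ n - 1 := by
  have heq : (Finset.univ.filter (fun 𝒜 : Finset (Finset (Fin n)) =>
      (∀ A ∈ 𝒜, ∀ B ∈ 𝒜, symmDiff A B ∉ 𝒜) ∧ 𝒜.card = 2 ^ (n - 1))) =
      (Finset.univ.filter (fun S : Finset (Fin n) => S.Nonempty)).image (fam n) := by
    ext 𝒜
    simp only [Finset.mem_filter, Finset.mem_univ, true_and, Finset.mem_image]
    constructor
    · rintro ⟨hfree, hcard⟩
      obtain ⟨S, hS, rfl⟩ := free_eq_fam hn 𝒜 hfree hcard
      exact ⟨S, hS, rfl⟩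
    · rintro ⟨S, hS, rfl⟩
      exact ⟨fam_free S, fam_card hS⟩
  rw [heq, Finset.card_image_of_injective _ fam_inj]
  have h2 : (Finset.univ.filter (fun S : Finset (Fin n) => S.Nonempty)) =
      Finset.univ \ {∅} := by
    ext S
    simp [Finset.nonempty_iff_ne_empty]
  rw [h2, Finset.card_sdiff_of_subset (by simp), Finset.card_singleton, Finset.card_univ,
    Fintype.card_finset, Fintype.card_fin]
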